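/- arXiv:2508.09961 — 2 statements merged into one kernel-verified Lean document; each statement's English description precedes it below -/
import Mathlib

section
/- Let $p$ be a prime, $q = p^r$, and $n \geq 2$. Then every Sylow $p$-subgroup of $PSL_n(\mathbb{F}_q)$ is isomorphic (as a group) to $\operatorname{Up}_n(\mathbb{F}_{p^r})$, the group of $n \times n$ unitriangular matrices over $\mathbb{F}_{p^r}$. -/
/-- A submonoid of a finite group is a subgroup. -/
def Submonoid.toSubgroupOfFinite {G : Type*} [Group G] [Finite G] (M : Submonoid G) :
    Subgroup G where
  carrier := M
  one_mem' := M.one_mem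
  mul_mem' := M.mul_mem
  inv_mem' := by
    intro a ha
    have h1 : a ^ orderOf a = 1 := pow_orderOf_eq_one a
    have h2 : 0 < orderOf a := orderOf_pos a
    have : a⁻¹ = a ^ (orderOf a - 1) := by
      rw [eq_comm, ← mul_eq_one_iff_eq_inv, ← pow_succ, Nat.sub_add_cancel h2, h1]
    rw [this]
    exact M.pow_mem ha _

@[simp] lemma Submonoid.mem_toSubgroupOfFinite {G : Type*} [Group G] [Finite G]
    (M : Submonoid G) (x : G) : x ∈ M.toSubgroupOfFinite ↔ x ∈ M := Iff.rfl

/-- The unitriangular matrix group as a subgroup of `GL n F`. -/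
def UpGroup (n : ℕ) (F : Type*) [Field F] [Fintype F] : Subgroup (GL (Fin n) F) :=
  Submonoid.toSubgroupOfFinite
  { carrier := {M : GL (Fin n) F | (∀ i j : Fin n, j < i → M.val i j = 0) ∧ ∀ i, M.val i i = 1}
    one_mem' := by
      constructor
      · intro i j hij
        rw [Units.val_one, Matrix.one_apply_ne (n := Fin n) (i := i) (j := j) (by rintro rfl; exact lt_irrefl i hij)]
      · intro i; rw [Units.val_one, Matrix.one_apply_eq]
    mul_mem' := by
      rintro A B ⟨hA1, hA2⟩ ⟨hB1, hB2⟩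
      constructor
      · intro i j hij
        show (A.val * B.val) i j = 0
        rw [Matrix.mul_apply]
        apply Finset.sum_eq_zero
        intro k _
        rcases lt_or_ge k i with hk | hk
        · rw [hA1 i k hk, zero_mul]
        · have : j < k := lt_of_lt_of_le hij hk
          rw [hB1 k j this, mul_zero]
      · intro i
        show (A.val * B.val) i i = 1
        rw [Matrix.mul_apply]
        rw [Finset.sum_eq_single i]
        · rw [hA2, hB2, one_mul]
        · intro k _ hk
          rcases lt_or_gt_of_ne hk with h | h
          · rw [hA1 i k h, zero_mul]
          · rw [hB1 k i h, mul_zero]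
        · intro h; exact absurd (Finset.mem_univ i) h }

/-!
Unitriangular matrices have determinant one and the only scalar among them is the identity, so
`UpGroup n F` embeds in `PSL_n(F)` as a subgroup of order `q ^ (0 + 1 + ⋯ + (n - 1))`. Its index
divides `|GL_n(F)| / q ^ (0 + 1 + ⋯ + (n - 1)) = ∏_{k=1}^{n} (q ^ k - 1)`, which is prime to `p`
because `p ∣ q`; hence the image is a Sylow `p`-subgroup, and every Sylow `p`-subgroup is conjugate
to it.
-/

open Matrix

theorem Fin.card_subtype_fst_lt_snd (n : ℕ) :
    Fintype.card {ij : Fin n × Fin n // ij.1 < ij.2} = ∑ j : Fin n, (j : ℕ) := by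
  simp only [Fintype.card_subtype, Finset.card_filter, Fintype.sum_prod_type_right]
  refine Finset.sum_congr rfl fun j _ => ?_
  rw [← Finset.card_filter, ← Fin.card_Iio]
  congr 1
  ext i
  simp

theorem Nat.coprime_sub_one_of_dvd {p m : ℕ} (hpm : p ∣ m) (hm : 0 < m) :
    Nat.Coprime p (m - 1) :=
  ((Nat.coprime_self_sub_right hm).mpr (Nat.coprime_one_right m)).coprime_dvd_left hpm

theorem Nat.coprime_prod_pow_sub_one {p q : ℕ} (hpq : p ∣ q) (hq : 0 < q) (n : ℕ) :
    Nat.Coprime p (∏ i : Fin n, (q ^ (n - i) - 1)) :=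
  Nat.Coprime.prod_right fun i _ =>
    Nat.coprime_sub_one_of_dvd (hpq.trans (dvd_pow_self q (by omega))) (by positivity)

theorem Matrix.det_eq_one_of_unitriangular {m R : Type*} [Fintype m] [LinearOrder m]
    [CommRing R] {A : Matrix m m R} (hlower : ∀ i j, j < i → A i j = 0)
    (hdiag : ∀ i, A i i = 1) : A.det = 1 := by
  rw [det_of_isUpperTriangular fun i j hij => hlower i j hij]
  exact Finset.prod_eq_one fun i _ => hdiag i

theorem Subgroup.index_dvd_of_card_dvd_card_mul {G : Type*} [Group G] [Finite G]
    (H : Subgroup G) {k : ℕ} (h : Nat.card G ∣ Nat.card H * k) : H.index ∣ k :=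
  Nat.dvd_of_mul_dvd_mul_left Nat.card_pos (H.card_mul_index ▸ h)

theorem Matrix.SpecialLinearGroup.card_quotient_center_dvd_card_GL {m R : Type*} [Fintype m]
    [DecidableEq m] [CommRing R] :
    Nat.card (SpecialLinearGroup m R ⧸ Subgroup.center (SpecialLinearGroup m R)) ∣
      Nat.card (GL m R) :=
  (Subgroup.card_quotient_dvd_card _).trans
    (Subgroup.card_dvd_of_injective _ SpecialLinearGroup.toGL_injective)

theorem Matrix.card_GL_field_eq_mul {F : Type*} [Field F] [Fintype F] (n : ℕ) :
    Nat.card (GL (Fin n) F) =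
      Fintype.card F ^ (∑ j : Fin n, (j : ℕ)) *
        ∏ i : Fin n, (Fintype.card F ^ (n - i) - 1) := by
  rw [card_GL_field, ← Finset.prod_pow_eq_pow_sum, ← Finset.prod_mul_distrib]
  refine Finset.prod_congr rfl fun i _ => ?_
  rw [Nat.mul_sub, mul_one, ← pow_add, Nat.add_sub_cancel' i.isLt.le]

section UpGroup

variable {n : ℕ} {F : Type*} [Field F] [Fintype F]

variable (n F) in
def unitriangularOfEntries (f : {ij : Fin n × Fin n // ij.1 < ij.2} → F) :
    SpecialLinearGroup (Fin n) F :=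
  ⟨of fun i j => if h : i < j then f ⟨(i, j), h⟩ else if i = j then 1 else 0,
    det_eq_one_of_unitriangular (fun i j hij => by simp [hij.not_gt, hij.ne']) (by simp)⟩

variable (n F) in
noncomputable def UpGroup.equivEntries :
    UpGroup n F ≃ ({ij : Fin n × Fin n // ij.1 < ij.2} → F) where
  toFun M ij := M.val.val ij.val.1 ij.val.2
  invFun f := ⟨SpecialLinearGroup.toGL (unitriangularOfEntries n F f),
    fun i j hij => by simp [unitriangularOfEntries, SpecialLinearGroup.toGL, hij.not_gt, hij.ne'],
    fun i => by simp [unitriangularOfEntries, SpecialLinearGroup.toGL]⟩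
  left_inv := by
    rintro ⟨M, hlower, hdiag⟩
    ext i j
    rcases lt_trichotomy i j with h | rfl | h
    · simp [unitriangularOfEntries, SpecialLinearGroup.toGL, h]
    · simp [unitriangularOfEntries, SpecialLinearGroup.toGL, hdiag]
    · simp [unitriangularOfEntries, SpecialLinearGroup.toGL, h.not_gt, h.ne', hlower i j h]
  right_inv f := by
    ext ⟨⟨i, j⟩, h⟩
    simp [unitriangularOfEntries, SpecialLinearGroup.toGL, h]

theorem card_UpGroup : Nat.card (UpGroup n F) = Fintype.card F ^ ∑ j : Fin n, (j : ℕ) := by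
  rw [Nat.card_congr (UpGroup.equivEntries n F), Nat.card_eq_fintype_card, Fintype.card_fun,
    Fin.card_subtype_fst_lt_snd]

variable (n F) in
def UpGroup.toSL : UpGroup n F →* SpecialLinearGroup (Fin n) F where
  toFun M := ⟨M.val, det_eq_one_of_unitriangular M.2.1 M.2.2⟩
  map_one' := rfl
  map_mul' _ _ := rfl

variable (n F) in
def UpGroup.toPSL :
    UpGroup n F →* SpecialLinearGroup (Fin n) F ⧸ Subgroup.center (SpecialLinearGroup (Fin n) F) :=
  (QuotientGroup.mk' _).comp (UpGroup.toSL n F)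

theorem UpGroup.toPSL_injective : Function.Injective (UpGroup.toPSL n F) := by
  rw [injective_iff_map_eq_one]
  intro M hM
  obtain ⟨c, -, hc⟩ := Matrix.SpecialLinearGroup.mem_center_iff.mp
    ((QuotientGroup.eq_one_iff (UpGroup.toSL n F M)).mp hM)
  have hentry (i j : Fin n) : M.val.val i j = scalar (Fin n) c i j := by rw [hc]; rfl
  ext i j
  have hc1 : 1 = c := by simpa [M.2.2 i] using hentry i i
  simpa [← hc1] using hentry i j

theorem UpGroup.card_range_toPSL :
    Nat.card (UpGroup.toPSL n F).range = Fintype.card F ^ ∑ j : Fin n, (j : ℕ) := by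
  rw [← Nat.card_congr (MonoidHom.ofInjective UpGroup.toPSL_injective).toEquiv, card_UpGroup]

theorem UpGroup.index_range_toPSL_dvd :
    (UpGroup.toPSL n F).range.index ∣ ∏ i : Fin n, (Fintype.card F ^ (n - i) - 1) := by
  apply Subgroup.index_dvd_of_card_dvd_card_mul
  rw [card_range_toPSL, ← card_GL_field_eq_mul]
  exact SpecialLinearGroup.card_quotient_center_dvd_card_GL

end UpGroup

theorem sylow_p_PSL_general (p r n : ℕ) (hp : p.Prime) (hr : 1 ≤ r)
    (F : Type*) [Field F] [Fintype F] (hF : Fintype.card F = p ^ r)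
    (P : Sylow p (Matrix.SpecialLinearGroup (Fin n) F ⧸
      Subgroup.center (Matrix.SpecialLinearGroup (Fin n) F))) :
    Nonempty (↥(P : Subgroup (Matrix.SpecialLinearGroup (Fin n) F ⧸
      Subgroup.center (Matrix.SpecialLinearGroup (Fin n) F))) ≃* ↥(UpGroup n F)) := by
  have : Fact p.Prime := ⟨hp⟩
  have hpq : p ∣ Fintype.card F := hF ▸ dvd_pow_self p (by omega)
  have hpgroup : IsPGroup p (UpGroup.toPSL n F).range :=
    IsPGroup.of_card (n := r * ∑ j : Fin n, (j : ℕ)) <| by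
      rw [UpGroup.card_range_toPSL, hF, pow_mul]
  have hindex : ¬ p ∣ (UpGroup.toPSL n F).range.index := by
    rw [← hp.coprime_iff_not_dvd]
    exact (Nat.coprime_prod_pow_sub_one hpq Fintype.card_pos n).coprime_dvd_right
      UpGroup.index_range_toPSL_dvd
  exact ⟨(P.equiv (hpgroup.toSylow hindex)).trans
    (MonoidHom.ofInjective UpGroup.toPSL_injective).symm⟩

/-- For `q = p^r`, every Sylow `p`-subgroup of `PSL_n(F_q)` is isomorphic to
the group of `n × n` unitriangular matrices over `F_{p^r}`. -/
theorem sylow_p_PSL (p r n : ℕ) (hp : p.Prime) (hr : 1 ≤ r) (hn : 2 ≤ n)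
    (F : Type*) [Field F] [Fintype F] (hF : Fintype.card F = p ^ r)
    (P : Sylow p (Matrix.SpecialLinearGroup (Fin n) F ⧸
      Subgroup.center (Matrix.SpecialLinearGroup (Fin n) F))) :
    Nonempty (↥(P : Subgroup (Matrix.SpecialLinearGroup (Fin n) F ⧸
      Subgroup.center (Matrix.SpecialLinearGroup (Fin n) F))) ≃* ↥(UpGroup n F)) :=
  sylow_p_PSL_general p r n hp hr F hF P
end

section
/- Let $p$ be any prime and $q = p^r$. Then every Sylow $p$-subgroup of $PSp(2n,q)$ is isomorphic to the semidirect product $\operatorname{Sym}(n,p^r) \rtimes \operatorname{Up}_n(\mathbb{F}_{p^r})$, where $A \in \operatorname{Up}_n(\mathbb{F}_{p^r})$ acts on $B \in \operatorname{Sym}(n,p^r)$ by $A(B) = ABA^T$. Moreover, the set of matrices $\begin{pmatrix} A & 0 \\ 0 & (A^{-1})^T\end{pmatrix}\begin{pmatrix} I_n & B \\ 0 & I_n\end{pmatrix}$ with $A \in \operatorname{Up}_n(\mathbb{F}_{p^r})$ and $B \in \operatorname{Sym}(n,p^r)$ is such a Sylow $p$-subgroup inside $Sp(2n,q)$ (mapped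 isomorphically into $PSp(2n,q)$). -/
open Matrix

variable {F : Type*} [Field F] {n : ℕ}

/-- Twisted conjugation `B ↦ A * B * (σ(A))ᵀ` of an invertible matrix `A` on square matrices. -/
def matConj (σ : F →+* F) (A : GL (Fin n) F) (B : Matrix (Fin n) (Fin n) F) :
    Matrix (Fin n) (Fin n) F :=
  A.val * B * (A.val.map σ)ᵀ

lemma matConj_one (σ : F →+* F) (B : Matrix (Fin n) (Fin n) F) : matConj σ 1 B = B := by
  simp [matConj, Matrix.map_one σ σ.map_zero σ.map_one]

lemma matConj_mul (σ : F →+* F) (A A' : GL (Fin n) F) (B : Matrix (Fin n) (Fin n) F) :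
    matConj σ (A * A') B = matConj σ A (matConj σ A' B) := by
  simp only [matConj, Units.val_mul, Matrix.map_mul, Matrix.transpose_mul, Matrix.mul_assoc]

lemma matConj_add (σ : F →+* F) (A : GL (Fin n) F) (B C : Matrix (Fin n) (Fin n) F) :
    matConj σ A (B + C) = matConj σ A B + matConj σ A C := by
  simp [matConj, Matrix.mul_add, Matrix.add_mul]

lemma matConj_inv_cancel (σ : F →+* F) (A : GL (Fin n) F) (B : Matrix (Fin n) (Fin n) F) :
    matConj σ A⁻¹ (matConj σ A B) = B := by
  rw [← matConj_mul, inv_mul_cancel, matConj_one]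

lemma matConj_cancel_inv (σ : F →+* F) (A : GL (Fin n) F) (B : Matrix (Fin n) (Fin n) F) :
    matConj σ A (matConj σ A⁻¹ B) = B := by
  rw [← matConj_mul, mul_inv_cancel, matConj_one]

/-- The action of a subgroup `U ≤ GL n F` on an `U`-stable additive subgroup `N` of matrices
by twisted conjugation `B ↦ A * B * (σ(A))ᵀ`, as a homomorphism into the automorphisms of
(the multiplicative version of) `N`. -/
def matConjMulAut (U : Subgroup (GL (Fin n) F)) (N : AddSubgroup (Matrix (Fin n) (Fin n) F))
    (σ : F →+* F) (h : ∀ A : GL (Fin n) F, A ∈ U → ∀ B ∈ N, matConj σ A B ∈ N) :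
    ↥U →* MulAut (Multiplicative ↥N) where
  toFun A :=
    { toFun := fun B => Multiplicative.ofAdd
        ⟨matConj σ A.val (Multiplicative.toAdd B).val, h A.val A.2 _ (Multiplicative.toAdd B).2⟩
      invFun := fun B => Multiplicative.ofAdd
        ⟨matConj σ (A.val)⁻¹ (Multiplicative.toAdd B).val,
          h (A.val)⁻¹ (U.inv_mem A.2) _ (Multiplicative.toAdd B).2⟩
      left_inv := fun B => by
        apply Multiplicative.toAdd.injective
        exact Subtype.ext (matConj_inv_cancel σ A.val _)
      right_inv := fun B => by
        apply Multiplicative.toAdd.injective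
        exact Subtype.ext (matConj_cancel_inv σ A.val _)
      map_mul' := fun B C => by
        apply Multiplicative.toAdd.injective
        exact Subtype.ext (matConj_add σ A.val _ _) }
  map_one' := by
    refine MulEquiv.ext fun B => ?_
    exact congrArg Multiplicative.ofAdd (Subtype.ext (matConj_one σ _))
  map_mul' A A' := by
    refine MulEquiv.ext fun B => ?_
    exact congrArg Multiplicative.ofAdd (Subtype.ext (matConj_mul σ A.val A'.val _))


open Matrix

/-- The additive group of symmetric `n × n` matrices over `F`. -/
def symAddSubgroup (n : ℕ) (F : Type*) [Field F] :
    AddSubgroup (Matrix (Fin n) (Fin n) F) where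
  carrier := {B | Bᵀ = B}
  add_mem' := by intro a b ha hb; simp only [Set.mem_setOf_eq] at *; rw [transpose_add, ha, hb]
  zero_mem' := transpose_zero
  neg_mem' := by intro a ha; simp only [Set.mem_setOf_eq] at *; rw [transpose_neg, ha]

lemma map_ringHom_id {n : ℕ} {F : Type*} [Field F] (M : Matrix (Fin n) (Fin n) F) :
    M.map ⇑(RingHom.id F) = M := by ext i j; simp

lemma symAddSubgroup_stable (n : ℕ) (F : Type*) [Field F] [Fintype F] :
    ∀ A : GL (Fin n) F, A ∈ UpGroup n F →
      ∀ B ∈ symAddSubgroup n F, matConj (RingHom.id F) A B ∈ symAddSubgroup n F := by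
  intro A _ B hB
  have hB' : Bᵀ = B := hB
  show (matConj (RingHom.id F) A B)ᵀ = matConj (RingHom.id F) A B
  simp [matConj, Matrix.transpose_mul, Matrix.mul_assoc, hB', map_ringHom_id]

/-- The semidirect product `Sym(n, F) ⋊ Up_n(F)` with `A` acting on `B` by `A * B * Aᵀ`. -/
noncomputable def symSemidirect (n : ℕ) (F : Type*) [Field F] [Fintype F] :=
  SemidirectProduct (Multiplicative ↥(symAddSubgroup n F)) ↥(UpGroup n F)
    (matConjMulAut (UpGroup n F) (symAddSubgroup n F) (RingHom.id F)
      (symAddSubgroup_stable n F))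

noncomputable instance (n : ℕ) (F : Type*) [Field F] [Fintype F] :
    Group (symSemidirect n F) :=
  SemidirectProduct.instGroup

/-- `PSp(2n, q)`: the quotient of the symplectic group by its center. -/
def PSpGroup (n : ℕ) (F : Type*) [Field F] :=
  ↥(Matrix.symplecticGroup (Fin n) F) ⧸ Subgroup.center ↥(Matrix.symplecticGroup (Fin n) F)

instance (n : ℕ) (F : Type*) [Field F] : Group (PSpGroup n F) :=
  inferInstanceAs (Group (_ ⧸ _))


/-!
In the basis order `e₁, …, eₙ, fₙ, …, f₁` the matrices `diag(A, A⁻ᵀ) [[1, B], [0, 1]]` are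
exactly the upper unitriangular symplectic matrices; they form the image `P` of an injective
homomorphism from `Sym(n, q) ⋊ Up_n(q)`, and `P` is a `p`-group because `(1 + N) ^ p ^ k = 1`
for nilpotent `N` in characteristic `p`. `P` is Sylow: a `p`-group `Q ⊇ P` fixes a nonzero vector
in each quotient of the coordinate flag, the elements of `P` already force that vector to be the
next basis vector, so `Q` is unitriangular as well. Commuting with `J` forces a central element
of `P` to be `1`, so `P` maps isomorphically onto a Sylow `p`-subgroup of `PSp(2n, q)`, and all
Sylow `p`-subgroups are isomorphic.
-/

namespace Matrix

variable {ι R K : Type*} [DecidableEq ι]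

def IsUnitriangular {α : Type*} [Preorder α] [Zero R] [One R] (ord : ι → α)
    (M : Matrix ι ι R) : Prop :=
  ∀ a b, ord b ≤ ord a → M a b = (1 : Matrix ι ι R) a b

theorem isUnitriangular_id_iff [LinearOrder ι] [Zero R] [One R] {A : Matrix ι ι R} :
    IsUnitriangular id A ↔ (∀ i j, j < i → A i j = 0) ∧ ∀ i, A i i = 1 := by
  refine ⟨fun h => ⟨fun i j hij => (h i j hij.le).trans (one_apply_ne hij.ne'),
    fun i => (h i i le_rfl).trans (one_apply_eq i)⟩, fun ⟨hlt, hdiag⟩ i j (hij : j ≤ i) => ?_⟩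
  rcases hij.lt_or_eq with hij | rfl
  · rw [hlt i j hij, one_apply_ne hij.ne']
  · rw [hdiag, one_apply_eq]

theorem IsUnitriangular.eq_one_of_transpose [LinearOrder ι] [Zero R] [One R]
    {A : Matrix ι ι R} (hA : IsUnitriangular id A) (hAt : IsUnitriangular id Aᵀ) : A = 1 := by
  ext i j
  rcases le_total j i with hji | hij
  · exact hA i j hji
  · rw [← transpose_apply A, hAt j i hij, ← transpose_apply 1, transpose_one]

variable [Fintype ι]

theorem IsUnitriangular.pow_prime_pow_eq_one [Ring R] {p : ℕ} [Fact p.Prime] [CharP R p]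
    {ord : ι → ℕ} {N : ℕ} (hN : ∀ a, ord a < N) {M : Matrix ι ι R}
    (hM : IsUnitriangular ord M) : M ^ p ^ N = 1 := by
  cases isEmpty_or_nonempty ι
  · exact Subsingleton.elim _ _
  set D := M - 1
  have hD : ∀ a b, ord b ≤ ord a → D a b = 0 := fun a b hab => by
    simp [D, hM a b hab]
  have hDpow : ∀ k a b, ord b < ord a + k → (D ^ k) a b = 0 := by
    intro k
    induction k with
    | zero => exact fun a b hab => one_apply_ne (by rintro rfl; omega)
    | succ k ih =>
      intro a b hab
      rw [pow_succ', mul_apply]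
      refine Finset.sum_eq_zero fun c _ => ?_
      rcases le_or_gt (ord c) (ord a) with hc | hc
      · rw [hD a c hc, zero_mul]
      · rw [ih c b (by omega), mul_zero]
  have hDN : D ^ p ^ N = 0 :=
    pow_eq_zero_of_le (Nat.lt_pow_self (Fact.out : p.Prime).one_lt).le
      (ext fun a b => hDpow N a b (by have := hN b; omega))
  rw [show M = 1 + D from (add_sub_cancel 1 M).symm,
    add_pow_char_pow_of_commute _ _ (Commute.one_left D), hDN, one_pow, add_zero]

theorem transvection_mulVec_apply_same [CommRing R] (s t : ι) (c : R) (v : ι → R) :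
    (transvection s t c *ᵥ v) s = v s + c * v t := by
  simp [transvection, add_mulVec, single_mulVec]

theorem _root_.IsPGroup.exists_ne_zero_forall_mulVec_eq [Ring R] [Fintype R] {p : ℕ}
    [Fact p.Prime] [CharP R p] [Nonempty ι] {H : Type*} [Group H] (hH : IsPGroup p H)
    (σ : H →* Matrix ι ι R) : ∃ v ≠ 0, ∀ h, σ h *ᵥ v = v := by
  let _ : MulAction H (ι → R) :=
    { smul := fun h v => σ h *ᵥ v
      one_smul := fun v => by simp [HSMul.hSMul]
      mul_smul := fun g h v => by simp [HSMul.hSMul, mulVec_mulVec] }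
  have hp : p ∣ Nat.card (ι → R) := by
    rw [Nat.card_fun, Nat.card_eq_fintype_card (α := R)]
    exact dvd_pow ((CharP.cast_eq_zero_iff R p _).1 (Nat.cast_card_eq_zero R)) Nat.card_pos.ne'
  obtain ⟨v, hv, hv0⟩ := hH.exists_fixed_point_of_prime_dvd_card_of_fixed_point (ι → R) hp
    (a := 0) fun h => mulVec_zero _
  exact ⟨v, hv0.symm, fun h => hv h⟩

/-- Restriction to the coordinates `{a | j ≤ ord a}`; it is multiplicative on `Q` because no
matrix of `Q` has an entry from a coordinate below `j` to one above. -/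
def restrictAbove [CommRing R] {G : Type*} [Group G] (ρ : G →* Matrix ι ι R) (ord : ι → ℕ)
    (j : ℕ) (Q : Subgroup G) (hQ : ∀ x ∈ Q, ∀ a c, ord c < j → j ≤ ord a → ρ x a c = 0) :
    Q →* Matrix {a // j ≤ ord a} {a // j ≤ ord a} R where
  toFun x := (ρ x).toSquareBlockProp (j ≤ ord ·)
  map_one' := by simp [toSquareBlockProp]
  map_mul' x y := by
    have hzero : (ρ x).toBlock (j ≤ ord ·) (¬ j ≤ ord ·) = 0 :=
      ext fun a c => hQ x x.2 a c (not_le.1 c.2) a.2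
    simp only [toSquareBlockProp, Subgroup.coe_mul, map_mul]
    rw [toBlock_mul_eq_add _ (j ≤ ord ·), hzero, Matrix.zero_mul, add_zero]

theorem restrictAbove_mulVec_apply [CommRing R] {G : Type*} [Group G] (ρ : G →* Matrix ι ι R)
    (ord : ι → ℕ) (j : ℕ) (Q : Subgroup G)
    (hQ : ∀ x ∈ Q, ∀ a c, ord c < j → j ≤ ord a → ρ x a c = 0) (x : Q)
    (v : {a // j ≤ ord a} → R) (a : {a // j ≤ ord a}) :
    (restrictAbove ρ ord j Q hQ x *ᵥ v) a =
      (ρ x *ᵥ fun c => if h : j ≤ ord c then v ⟨c, h⟩ else 0) a := by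
  simp only [mulVec, dotProduct]
  rw [← Fintype.sum_subtype_add_sum_subtype (j ≤ ord ·)]
  rw [Fintype.sum_eq_zero (fun c : {c // ¬ j ≤ ord c} => _) fun c => by
    rw [dif_neg c.2, mul_zero], add_zero]
  exact Fintype.sum_congr _ _ fun c => by rw [dif_pos c.2]; rfl

theorem isUnitriangular_of_isPGroup [Field K] [Fintype K] {p : ℕ} [Fact p.Prime] [CharP K p]
    {G : Type*} [Group G] (ρ : G →* Matrix ι ι K) (ord : ι → ℕ) {P Q : Subgroup G}
    (hQ : IsPGroup p Q) (hPQ : P ≤ Q)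
    (hP : ∀ b (w : ι → K), (∀ a, ord a < ord b → w a = 0) → (∀ x ∈ P, (ρ x *ᵥ w) b = w b) →
      ∀ a ≠ b, w a = 0) :
    ∀ x ∈ Q, IsUnitriangular ord (ρ x) := by
  suffices h : ∀ b, ∀ x ∈ Q, ∀ a, ord b ≤ ord a → ρ x a b = (1 : Matrix ι ι K) a b from
    fun x hx a b hab => h b x hx a hab
  intro b
  induction hj : ord b using Nat.strong_induction_on generalizing b with
  | _ j ih =>
  have hQj : ∀ x ∈ Q, ∀ a c, ord c < j → j ≤ ord a → ρ x a c = 0 := fun x hx a c hc ha =>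
    (ih _ hc c rfl x hx a (by omega)).trans (one_apply_ne (by rintro rfl; omega))
  have : Nonempty {a // j ≤ ord a} := ⟨⟨b, hj.ge⟩⟩
  -- a vector fixed by `Q` modulo the coordinates below `j`; `hP` puts it on the line of `e_b`
  obtain ⟨v, hv0, hv⟩ := hQ.exists_ne_zero_forall_mulVec_eq (restrictAbove ρ ord j Q hQj)
  set w : ι → K := fun c => if h : j ≤ ord c then v ⟨c, h⟩ else 0
  have hw_fix : ∀ x ∈ Q, ∀ a, j ≤ ord a → (ρ x *ᵥ w) a = w a := fun x hx a ha => by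
    rw [← restrictAbove_mulVec_apply ρ ord j Q hQj ⟨x, hx⟩ v ⟨a, ha⟩, hv]
    simp [w, ha]
  have hw : w = Pi.single b (w b) := by
    refine funext fun a => ?_
    rcases eq_or_ne a b with rfl | hab
    · simp
    · rw [Pi.single_eq_of_ne hab, hP b w (fun a ha => dif_neg (by omega))
        (fun x hx => hw_fix x (hPQ hx) b hj.ge) a hab]
  have hwb : w b ≠ 0 := fun h => hv0 <| funext fun c => by
    simpa [w, c.2, h] using congrFun hw c
  intro x hx a ha
  have hxa := hw_fix x hx a (hj ▸ ha)
  rw [hw, mulVec_single] at hxa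
  refine mul_right_cancel₀ hwb ?_
  simpa [Pi.single_apply, one_apply, eq_comm] using hxa

end Matrix

open Matrix

theorem mem_UpGroup_iff {n : ℕ} {F : Type*} [Field F] [Fintype F] {A : GL (Fin n) F} :
    A ∈ UpGroup n F ↔ IsUnitriangular id (A : Matrix (Fin n) (Fin n) F) :=
  isUnitriangular_id_iff.symm

namespace SymplecticGroup

section General

variable {l R : Type*} [Fintype l] [DecidableEq l] [CommRing R]

theorem fromBlocks_zero₂₁_mem_iff {A B D : Matrix l l R} :
    fromBlocks A B 0 D ∈ symplecticGroup l R ↔ Bᵀ * D = Dᵀ * B ∧ Aᵀ * D = 1 := by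
  simp [fromBlocks_mem_iff]

theorem transpose_mul_transpose_inv (A : GL l R) : (A : Matrix l l R)ᵀ * (↑A⁻¹)ᵀ = 1 := by
  rw [← transpose_mul, ← Units.val_mul, inv_mul_cancel, Units.val_one, transpose_one]

def levi : GL l R →* symplecticGroup l R where
  toFun A := ⟨fromBlocks A 0 0 (↑A⁻¹)ᵀ,
    fromBlocks_zero₂₁_mem_iff.2 ⟨by simp, transpose_mul_transpose_inv A⟩⟩
  map_one' := Subtype.ext <| by simp
  map_mul' A B := Subtype.ext <| by simp [fromBlocks_multiply]

theorem coe_levi (A : GL l R) : (levi A : Matrix (l ⊕ l) (l ⊕ l) R) =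
    fromBlocks (A : Matrix l l R) 0 0 (↑A⁻¹)ᵀ := rfl

theorem levi_mul_fromBlocks_one (A : GL l R) (B : Matrix l l R) :
    (levi A : Matrix (l ⊕ l) (l ⊕ l) R) * fromBlocks 1 B 0 1 =
      fromBlocks A ((A : Matrix l l R) * B) 0 (↑A⁻¹)ᵀ := by
  simp [coe_levi, fromBlocks_multiply]

theorem fromBlocks_one_mul_levi (A : GL l R) (B : Matrix l l R) :
    fromBlocks 1 B 0 1 * (levi A : Matrix (l ⊕ l) (l ⊕ l) R) =
      fromBlocks A (B * (↑A⁻¹)ᵀ) 0 (↑A⁻¹)ᵀ := by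
  simp [coe_levi, fromBlocks_multiply]

theorem levi_mul_fromBlocks_one_eq (A : GL l R) (B : Matrix l l R) :
    (levi A : Matrix (l ⊕ l) (l ⊕ l) R) * fromBlocks 1 B 0 1 =
      fromBlocks 1 ((A : Matrix l l R) * B * (A : Matrix l l R)ᵀ) 0 1 *
        (levi A : Matrix (l ⊕ l) (l ⊕ l) R) := by
  rw [levi_mul_fromBlocks_one, fromBlocks_one_mul_levi, Matrix.mul_assoc,
    transpose_mul_transpose_inv, Matrix.mul_one]

end General

/-- Position of the basis vectors in the order `e₁, …, eₙ, fₙ, …, f₁`, in which the range of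
`symSemidirectHom` is exactly the upper unitriangular part of the symplectic group. -/
def flagIndex (n : ℕ) : Fin n ⊕ Fin n → ℕ :=
  Sum.elim (↑) fun i => 2 * n - 1 - i

theorem flagIndex_lt (a : Fin n ⊕ Fin n) : flagIndex n a < 2 * n := by
  rcases a with i | i <;> simp [flagIndex] <;> omega

theorem isUnitriangular_fromBlocks_iff {R : Type*} [Zero R] [One R]
    {A B C D : Matrix (Fin n) (Fin n) R} :
    IsUnitriangular (flagIndex n) (fromBlocks A B C D) ↔
      IsUnitriangular id A ∧ C = 0 ∧ IsUnitriangular id Dᵀ := by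
  constructor
  · intro h
    refine ⟨fun i j hij => ?_, ext fun i j => ?_, fun i j (hij : j ≤ i) => ?_⟩
    · simpa [one_apply] using h (.inl i) (.inl j) (by simpa [flagIndex] using hij)
    · simpa [one_apply] using h (.inr i) (.inl j) (by simp [flagIndex]; omega)
    · simpa [one_apply, eq_comm] using
        h (.inr j) (.inr i) (by rw [Fin.le_iff_val_le_val] at hij; simp [flagIndex]; omega)
  · rintro ⟨hA, rfl, hD⟩ (i | i) (j | j) h
    · simpa [one_apply] using hA i j (by simpa [flagIndex] using h)
    · simp [flagIndex] at h; omega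
    · simp [one_apply]
    · simpa [one_apply, eq_comm] using
        hD j i (show i ≤ j from Fin.le_iff_val_le_val.2 (by simp [flagIndex] at h; omega))

theorem levi_mulVec_inl (A : GL (Fin n) F) (w : Fin n ⊕ Fin n → F) (i : Fin n) :
    ((levi A : Matrix (Fin n ⊕ Fin n) (Fin n ⊕ Fin n) F) *ᵥ w) (.inl i) =
      ((A : Matrix (Fin n) (Fin n) F) *ᵥ (w ∘ .inl)) i := by
  simp [coe_levi, fromBlocks_mulVec]

theorem levi_mulVec_inr (A : GL (Fin n) F) (w : Fin n ⊕ Fin n → F) (i : Fin n) :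
    ((levi A : Matrix (Fin n ⊕ Fin n) (Fin n ⊕ Fin n) F) *ᵥ w) (.inr i) =
      ((↑A⁻¹ : Matrix (Fin n) (Fin n) F)ᵀ *ᵥ (w ∘ .inr)) i := by
  simp [coe_levi, fromBlocks_mulVec]

def unipotent (n : ℕ) (F : Type*) [Field F] :
    Multiplicative (symAddSubgroup n F) →* symplecticGroup (Fin n) F where
  toFun B := ⟨fromBlocks 1 B.toAdd 0 1, fromBlocks_zero₂₁_mem_iff.2
    ⟨by rw [Matrix.mul_one, transpose_one, Matrix.one_mul]; exact B.toAdd.2, by simp⟩⟩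
  map_one' := Subtype.ext fromBlocks_one
  map_mul' B C := Subtype.ext <| by simp [fromBlocks_multiply, add_comm]

theorem unipotent_mulVec_inl (B : Multiplicative (symAddSubgroup n F))
    (w : Fin n ⊕ Fin n → F) (i : Fin n) :
    ((unipotent n F B : Matrix (Fin n ⊕ Fin n) (Fin n ⊕ Fin n) F) *ᵥ w) (.inl i) =
      w (.inl i) + (B.toAdd.val *ᵥ (w ∘ .inr)) i := by
  simp [unipotent, fromBlocks_mulVec]

def symSemidirectHom (n : ℕ) (F : Type*) [Field F] [Fintype F] :
    symSemidirect n F →* symplecticGroup (Fin n) F :=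
  SemidirectProduct.lift (unipotent n F) (levi.comp (UpGroup n F).subtype) fun A => by
    refine MonoidHom.ext fun B => ?_
    simp only [MonoidHom.comp_apply, MulEquiv.coe_toMonoidHom, MulAut.conj_apply,
      eq_mul_inv_iff_mul_eq]
    exact Subtype.ext (levi_mul_fromBlocks_one_eq A.val (Multiplicative.toAdd B).val).symm

variable [Fintype F]

theorem coe_symSemidirectHom (g : symSemidirect n F) :
    (symSemidirectHom n F g : Matrix (Fin n ⊕ Fin n) (Fin n ⊕ Fin n) F) =
      fromBlocks 1 (Multiplicative.toAdd g.left).val 0 1 *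
        (levi g.right.val : Matrix (Fin n ⊕ Fin n) (Fin n ⊕ Fin n) F) := rfl

theorem levi_mem_range (A : UpGroup n F) : levi A.val ∈ (symSemidirectHom n F).range :=
  ⟨.inr A, SemidirectProduct.lift_inr _ _ _ _⟩

theorem unipotent_mem_range (B : Multiplicative (symAddSubgroup n F)) :
    unipotent n F B ∈ (symSemidirectHom n F).range :=
  ⟨.inl B, SemidirectProduct.lift_inl _ _ _ _⟩

theorem symSemidirectHom_injective : Function.Injective (symSemidirectHom n F) := by
  refine (injective_iff_map_eq_one _).2 fun g hg => ?_
  have h := congrArg Subtype.val hg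
  rw [coe_symSemidirectHom, fromBlocks_one_mul_levi, OneMemClass.coe_one, ← fromBlocks_one,
    fromBlocks_inj] at h
  obtain ⟨hA, hB, -, -⟩ := h
  have hright : g.right = 1 := Subtype.ext (Units.ext hA)
  rw [hright] at hB
  have hleft : g.left = 1 :=
    Multiplicative.toAdd.injective (Subtype.ext (by simpa using hB))
  exact SemidirectProduct.ext hleft hright

theorem isUnitriangular_of_mem_range {x : symplecticGroup (Fin n) F}
    (hx : x ∈ (symSemidirectHom n F).range) :
    IsUnitriangular (flagIndex n) (x : Matrix (Fin n ⊕ Fin n) (Fin n ⊕ Fin n) F) := by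
  obtain ⟨g, rfl⟩ := hx
  rw [coe_symSemidirectHom, fromBlocks_one_mul_levi, isUnitriangular_fromBlocks_iff,
    transpose_transpose]
  exact ⟨mem_UpGroup_iff.1 g.right.2, rfl, mem_UpGroup_iff.1 (inv_mem g.right.2)⟩

theorem exists_levi_mul_of_isUnitriangular {x : symplecticGroup (Fin n) F}
    (hx : IsUnitriangular (flagIndex n) (x : Matrix (Fin n ⊕ Fin n) (Fin n ⊕ Fin n) F)) :
    ∃ A : UpGroup n F, ∃ B : Matrix (Fin n) (Fin n) F, Bᵀ = B ∧
      (x : Matrix (Fin n ⊕ Fin n) (Fin n ⊕ Fin n) F) =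
        (levi A.val : Matrix (Fin n ⊕ Fin n) (Fin n ⊕ Fin n) F) * fromBlocks 1 B 0 1 := by
  set M := (x : Matrix (Fin n ⊕ Fin n) (Fin n ⊕ Fin n) F)
  obtain ⟨hA, h21, hD⟩ := isUnitriangular_fromBlocks_iff.1 (M.fromBlocks_toBlocks ▸ hx)
  have hM : M = fromBlocks M.toBlocks₁₁ M.toBlocks₁₂ 0 M.toBlocks₂₂ := by
    rw [← h21, fromBlocks_toBlocks]
  have hmem : M ∈ symplecticGroup (Fin n) F := x.2
  rw [hM] at hmem
  obtain ⟨hsymm, hinv⟩ := fromBlocks_zero₂₁_mem_iff.1 hmem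
  have hinv' : M.toBlocks₁₁ * M.toBlocks₂₂ᵀ = 1 := by
    simpa using congrArg transpose (mul_eq_one_comm.1 hinv)
  let A : GL (Fin n) F := ⟨M.toBlocks₁₁, M.toBlocks₂₂ᵀ, hinv', mul_eq_one_comm.1 hinv'⟩
  refine ⟨⟨A, mem_UpGroup_iff.2 hA⟩, M.toBlocks₂₂ᵀ * M.toBlocks₁₂, ?_, ?_⟩
  · rw [transpose_mul, transpose_transpose, hsymm]
  · rw [levi_mul_fromBlocks_one, ← Matrix.mul_assoc]
    exact hM.trans (by simp [A, hinv'])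

theorem levi_mul_mem_range (A : UpGroup n F) {B : Matrix (Fin n) (Fin n) F} (hB : Bᵀ = B)
    {x : symplecticGroup (Fin n) F}
    (hx : (x : Matrix (Fin n ⊕ Fin n) (Fin n ⊕ Fin n) F) =
      (levi A.val : Matrix (Fin n ⊕ Fin n) (Fin n ⊕ Fin n) F) * fromBlocks 1 B 0 1) :
    x ∈ (symSemidirectHom n F).range := by
  have hsymm : (A.val.val * B * A.val.valᵀ)ᵀ = A.val.val * B * A.val.valᵀ := by
    rw [transpose_mul, transpose_mul, transpose_transpose, hB, Matrix.mul_assoc]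
  exact ⟨⟨Multiplicative.ofAdd ⟨_, hsymm⟩, A⟩,
    Subtype.ext <| (levi_mul_fromBlocks_one_eq A.val B).symm.trans hx.symm⟩

theorem mem_range_iff_isUnitriangular (x : symplecticGroup (Fin n) F) :
    x ∈ (symSemidirectHom n F).range ↔
      IsUnitriangular (flagIndex n) (x : Matrix (Fin n ⊕ Fin n) (Fin n ⊕ Fin n) F) := by
  refine ⟨isUnitriangular_of_mem_range, fun hx => ?_⟩
  obtain ⟨A, B, hB, hAB⟩ := exists_levi_mul_of_isUnitriangular hx
  exact levi_mul_mem_range A hB hAB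

theorem mem_range_iff_exists_levi_mul (x : symplecticGroup (Fin n) F) :
    x ∈ (symSemidirectHom n F).range ↔
      ∃ A : UpGroup n F, ∃ B : Matrix (Fin n) (Fin n) F, Bᵀ = B ∧
        (x : Matrix (Fin n ⊕ Fin n) (Fin n ⊕ Fin n) F) =
          (levi A.val : Matrix (Fin n ⊕ Fin n) (Fin n ⊕ Fin n) F) * fromBlocks 1 B 0 1 :=
  ⟨fun hx => exists_levi_mul_of_isUnitriangular (isUnitriangular_of_mem_range hx),
    fun ⟨A, _, hB, hAB⟩ => levi_mul_mem_range A hB hAB⟩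

theorem disjoint_range_center :
    Disjoint (symSemidirectHom n F).range (Subgroup.center (symplecticGroup (Fin n) F)) := by
  refine Subgroup.disjoint_def.2 fun {x} hx hc => Subtype.ext ?_
  set M := (x : Matrix (Fin n ⊕ Fin n) (Fin n ⊕ Fin n) F)
  have hxu : IsUnitriangular (flagIndex n) M := isUnitriangular_of_mem_range hx
  obtain ⟨hA, h21, hD⟩ := isUnitriangular_fromBlocks_iff.1 (M.fromBlocks_toBlocks ▸ hxu)
  have hM : M = fromBlocks M.toBlocks₁₁ M.toBlocks₁₂ 0 M.toBlocks₂₂ := by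
    rw [← h21, fromBlocks_toBlocks]
  -- conjugation by `J` swaps the diagonal blocks and moves the upper-right block down
  have hJ : J (Fin n) F * M = M * J (Fin n) F :=
    congrArg Subtype.val (Subgroup.mem_center_iff.1 hc (symJ (Fin n) F))
  rw [hM, J, fromBlocks_multiply, fromBlocks_multiply] at hJ
  simp only [Matrix.zero_mul, Matrix.mul_zero, Matrix.one_mul, Matrix.mul_one, Matrix.neg_mul,
    Matrix.mul_neg, zero_add, add_zero, neg_zero, fromBlocks_inj, neg_inj] at hJ
  obtain ⟨hC, hDA, -, -⟩ := hJ
  have hA1 : M.toBlocks₁₁ = 1 := hA.eq_one_of_transpose (hDA ▸ hD)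
  rw [hM, hA1, ← hC, hDA, hA1, fromBlocks_one]
  rfl

def transvectionUp {s t : Fin n} (hst : s < t) : UpGroup n F :=
  ⟨⟨transvection s t 1, transvection s t (-1),
      by rw [transvection_mul_transvection_same _ _ hst.ne, add_neg_cancel, transvection_zero],
      by rw [transvection_mul_transvection_same _ _ hst.ne, neg_add_cancel, transvection_zero]⟩,
    mem_UpGroup_iff.2 fun i j (hij : j ≤ i) => by
      rw [Units.val_mk, transvection, Matrix.add_apply, single_apply_of_ne _ _ _ _ _
        (by rintro ⟨rfl, rfl⟩; exact (hst.trans_le hij).false), add_zero]⟩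

/-- The transvections `1 + E_{it}` of `Up_n` and the symmetric matrices `E_{ik} + E_{ki}` of
`Sym` each add a single further coordinate of `w` to its `b`-th one. -/
theorem eq_zero_of_forall_mem_range_mulVec_apply_eq (b : Fin n ⊕ Fin n)
    (w : Fin n ⊕ Fin n → F) (hw : ∀ a, flagIndex n a < flagIndex n b → w a = 0)
    (hfix : ∀ x ∈ (symSemidirectHom n F).range,
      ((x : Matrix (Fin n ⊕ Fin n) (Fin n ⊕ Fin n) F) *ᵥ w) b = w b) :
    ∀ a ≠ b, w a = 0 := by
  rcases b with i | k
  · rintro (t | k) hne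
    · rcases lt_trichotomy t i with hti | rfl | hit
      · exact hw _ hti
      · exact absurd rfl hne
      · have h := hfix _ (levi_mem_range (transvectionUp hit))
        rw [levi_mulVec_inl] at h
        simpa [transvectionUp, transvection_mulVec_apply_same] using h
    · let B : symAddSubgroup n F :=
        ⟨of fun s t => if s = i ∧ t = k ∨ s = k ∧ t = i then 1 else 0, by
          ext s t
          simp only [transpose_apply, of_apply]
          exact if_congr (by tauto) rfl rfl⟩
      have h := hfix _ (unipotent_mem_range (.ofAdd B))
      have hBi : ∀ t, (t = k ∨ i = k ∧ t = i) ↔ t = k := fun t => by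
        constructor
        · rintro (rfl | ⟨rfl, rfl⟩) <;> rfl
        · exact Or.inl
      rw [unipotent_mulVec_inl] at h
      simpa [B, mulVec, dotProduct, hBi] using h
  · rintro (t | s) hne
    · exact hw _ (by simp [flagIndex]; omega)
    · rcases lt_trichotomy s k with hsk | rfl | hks
      · have h := hfix _ (levi_mem_range (transvectionUp hsk))
        have hT : (↑(transvectionUp hsk : UpGroup n F).val⁻¹ : Matrix (Fin n) (Fin n) F)ᵀ =
            transvection k s (-1) := by
          simp [transvectionUp, transvection, transpose_single]
        rw [levi_mulVec_inr, hT, transvection_mulVec_apply_same] at h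
        simpa using h
      · exact absurd rfl hne
      · exact hw _ (by simp [flagIndex]; omega)

noncomputable def sylow (n : ℕ) (F : Type*) [Field F] [Fintype F] (p : ℕ) [Fact p.Prime]
    [CharP F p] : Sylow p (symplecticGroup (Fin n) F) where
  toSubgroup := (symSemidirectHom n F).range
  isPGroup' x := ⟨2 * n, Subtype.ext <| Subtype.ext <|
    (isUnitriangular_of_mem_range x.2).pow_prime_pow_eq_one flagIndex_lt⟩
  is_maximal' hQ hle := le_antisymm (fun x hx => (mem_range_iff_isUnitriangular x).2 <|
    isUnitriangular_of_isPGroup (symplecticGroup (Fin n) F).subtype (flagIndex n) hQ hle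
      eq_zero_of_forall_mem_range_mulVec_apply_eq x hx) hle

end SymplecticGroup

section Quotient

variable {G : Type*} [Group G] {N : Subgroup G} [N.Normal]

theorem QuotientGroup.injective_mk'_comp_subtype {H : Subgroup G} (hHN : Disjoint H N) :
    Function.Injective ((QuotientGroup.mk' N).comp H.subtype) :=
  (injective_iff_map_eq_one _).2 fun x hx => Subtype.ext <|
    Subgroup.disjoint_def.1 hHN x.2 ((QuotientGroup.eq_one_iff _).1 hx)

theorem Sylow.nonempty_mulEquiv_of_disjoint {p : ℕ} [Fact p.Prime] [Finite G] (P : Sylow p G)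
    (hPN : Disjoint (P : Subgroup G) N) (Q : Sylow p (G ⧸ N)) : Nonempty (Q ≃* P) := by
  have hrange : ((QuotientGroup.mk' N).comp (P : Subgroup G).subtype).range =
      P.mapSurjective (QuotientGroup.mk'_surjective N) := by
    rw [MonoidHom.range_comp, Subgroup.range_subtype, Sylow.coe_mapSurjective]
  exact ⟨(Q.equiv _).trans <| (MulEquiv.subgroupCongr hrange.symm).trans
    (MonoidHom.ofInjective (QuotientGroup.injective_mk'_comp_subtype hPN)).symm⟩

end Quotient

theorem sylow_p_PSp_general (p r n : ℕ) (hp : p.Prime)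
    (F : Type*) [Field F] [Fintype F] (hF : Fintype.card F = p ^ r) :
    (∀ P : Sylow p (PSpGroup n F),
      Nonempty (↥(P : Subgroup (PSpGroup n F)) ≃* symSemidirect n F)) ∧
    (∃ P : Sylow p ↥(Matrix.symplecticGroup (Fin n) F),
      ((P : Subgroup ↥(Matrix.symplecticGroup (Fin n) F)) :
          Set ↥(Matrix.symplecticGroup (Fin n) F)) =
        {M : ↥(Matrix.symplecticGroup (Fin n) F) |
          ∃ A : ↥(UpGroup n F), ∃ B : Matrix (Fin n) (Fin n) F, Bᵀ = B ∧
          M.val = Matrix.fromBlocks A.val.val 0 0 ((A.val⁻¹).val)ᵀ *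
            Matrix.fromBlocks 1 B 0 1} ∧
      ∃ P' : Sylow p (PSpGroup n F),
        (P' : Subgroup (PSpGroup n F)) = Subgroup.map
          (QuotientGroup.mk' (Subgroup.center ↥(Matrix.symplecticGroup (Fin n) F)))
          (P : Subgroup _) ∧
        Function.Injective fun x : ↥(P : Subgroup ↥(Matrix.symplecticGroup (Fin n) F)) =>
          QuotientGroup.mk' (Subgroup.center ↥(Matrix.symplecticGroup (Fin n) F)) x.val) := by
  have := Fact.mk hp
  have := charP_of_card_eq_prime_pow hF
  let P := SymplecticGroup.sylow n F p
  have hP : Disjoint (P : Subgroup (symplecticGroup (Fin n) F)) (Subgroup.center _) :=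
    SymplecticGroup.disjoint_range_center
  refine ⟨fun Q => ?_, P, ?_, P.mapSurjective (QuotientGroup.mk'_surjective _), rfl,
    QuotientGroup.injective_mk'_comp_subtype hP⟩
  · obtain ⟨e⟩ := P.nonempty_mulEquiv_of_disjoint hP Q
    exact ⟨e.trans (MonoidHom.ofInjective SymplecticGroup.symSemidirectHom_injective).symm⟩
  · ext x
    exact SymplecticGroup.mem_range_iff_exists_levi_mul x

/-- For any prime `p` and `q = p^r`: every Sylow `p`-subgroup of `PSp(2n, q)`
is isomorphic to `Sym(n, p^r) ⋊ Up_n(F_{p^r})` (with `A` acting by `B ↦ A B Aᵀ`); moreover the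
set of matrices `[[A, 0], [0, (A⁻¹)ᵀ]] * [[1, B], [0, 1]]` with `A` unitriangular and `B`
symmetric is such a Sylow `p`-subgroup inside `Sp(2n, q)`, mapped isomorphically into
`PSp(2n, q)`. -/
theorem sylow_p_PSp (p r n : ℕ) (hp : p.Prime) (hr : 1 ≤ r)
    (F : Type*) [Field F] [Fintype F] (hF : Fintype.card F = p ^ r) :
    (∀ P : Sylow p (PSpGroup n F),
      Nonempty (↥(P : Subgroup (PSpGroup n F)) ≃* symSemidirect n F)) ∧
    (∃ P : Sylow p ↥(Matrix.symplecticGroup (Fin n) F),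
      ((P : Subgroup ↥(Matrix.symplecticGroup (Fin n) F)) :
          Set ↥(Matrix.symplecticGroup (Fin n) F)) =
        {M : ↥(Matrix.symplecticGroup (Fin n) F) |
          ∃ A : ↥(UpGroup n F), ∃ B : Matrix (Fin n) (Fin n) F, Bᵀ = B ∧
          M.val = Matrix.fromBlocks A.val.val 0 0 ((A.val⁻¹).val)ᵀ *
            Matrix.fromBlocks 1 B 0 1} ∧
      ∃ P' : Sylow p (PSpGroup n F),
        (P' : Subgroup (PSpGroup n F)) = Subgroup.map
          (QuotientGroup.mk' (Subgroup.center ↥(Matrix.symplecticGroup (Fin n) F)))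
          (P : Subgroup _) ∧
        Function.Injective fun x : ↥(P : Subgroup ↥(Matrix.symplecticGroup (Fin n) F)) =>
          QuotientGroup.mk' (Subgroup.center ↥(Matrix.symplecticGroup (Fin n) F)) x.val) :=
  sylow_p_PSp_general p r n hp F hF
end
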